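/- Let (X,d_X), (Y,d_Y) be metric spaces with Y separable, and let 1 ≤ ξ < ω₁. A function f : X → Y is of Baire class ξ if and only if it is the uniform limit of a sequence of Δ⁰_{ξ+1}-functions from X to Y. -/
import Mathlib


open Set Filter Topology TopologicalSpace Ordinal

/-- The Borel pointclasses `Σ⁰_ξ` of a metrizable space, for ordinals `ξ ≥ 1`:
`Σ⁰₁` is the collection of open sets and, for `ξ > 1`, `Σ⁰_ξ` consists of the
countable unions of sets each of which belongs to `Π⁰_ν` (i.e. has its
complement in `Σ⁰_ν`) for some `1 ≤ ν < ξ`. -/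
noncomputable def SigmaZero (X : Type*) [TopologicalSpace X] : Ordinal.{0} → Set (Set X) :=
  WellFounded.fix wellFounded_lt fun ξ ih =>
    if ξ = 1 then {s | IsOpen s}
    else {s | ∃ f : ℕ → Set X,
      (∀ n, ∃ ν, ∃ hν : ν < ξ, 1 ≤ ν ∧ (f n)ᶜ ∈ ih ν hν) ∧ s = ⋃ n, f n}

/-- `Π⁰_ξ`: the complements of `Σ⁰_ξ` sets (with the convention that `Π⁰₀` is
the collection of clopen sets). -/
def PiZero (X : Type*) [TopologicalSpace X] (ξ : Ordinal.{0}) : Set (Set X) :=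
  if ξ = 0 then {s | IsClopen s} else {s | sᶜ ∈ SigmaZero X ξ}

/-- `Δ⁰_ξ = Σ⁰_ξ ∩ Π⁰_ξ`. -/
def DeltaZero (X : Type*) [TopologicalSpace X] (ξ : Ordinal.{0}) : Set (Set X) :=
  SigmaZero X ξ ∩ PiZero X ξ

/-- `f` is a `Δ⁰_ξ`-function if preimages of `Σ⁰_ξ` sets are `Σ⁰_ξ`. -/
def IsDeltaFun {X Y : Type*} [TopologicalSpace X] [TopologicalSpace Y]
    (ξ : Ordinal.{0}) (f : X → Y) : Prop :=
  ∀ A ∈ SigmaZero Y ξ, f ⁻¹' A ∈ SigmaZero X ξ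

/-- Baire class `ξ` functions (for `ξ ≥ 1`): `f` is of Baire class `1` if
preimages of open sets are `Σ⁰₂`, and for `ξ > 1` it is of Baire class `ξ` if it
is the pointwise limit of a sequence of functions each of Baire class `ν` for
some `1 ≤ ν < ξ`. -/
noncomputable def BaireClass {X Y : Type*} [TopologicalSpace X] [TopologicalSpace Y] :
    Ordinal.{0} → (X → Y) → Prop :=
  WellFounded.fix wellFounded_lt fun ξ ih f =>
    if ξ = 1 then ∀ U : Set Y, IsOpen U → f ⁻¹' U ∈ SigmaZero X 2
    else ∃ g : ℕ → X → Y,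
      (∀ n, ∃ ν, ∃ hν : ν < ξ, 1 ≤ ν ∧ ih ν hν (g n)) ∧
      ∀ x, Tendsto (fun n => g n x) atTop (𝓝 (f x))

section Aux
variable {X Y : Type*}

theorem mem_sigmaZero_one_iff [TopologicalSpace X] {s : Set X} :
    s ∈ SigmaZero X 1 ↔ IsOpen s := by
  rw [SigmaZero, WellFounded.fix_eq]
  simp

theorem mem_sigmaZero_iff [TopologicalSpace X] {ξ : Ordinal.{0}} (hξ : ξ ≠ 1) {s : Set X} :
    s ∈ SigmaZero X ξ ↔ ∃ f : ℕ → Set X,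
      (∀ n, ∃ ν, ν < ξ ∧ 1 ≤ ν ∧ (f n)ᶜ ∈ SigmaZero X ν) ∧ s = ⋃ n, f n := by
  rw [SigmaZero, WellFounded.fix_eq]
  simp only [hξ, if_false, mem_setOf_eq]
  constructor
  · rintro ⟨f, hf, rfl⟩
    exact ⟨f, fun n => by obtain ⟨ν, hν, h1, h2⟩ := hf n; exact ⟨ν, hν, h1, h2⟩, rfl⟩
  · rintro ⟨f, hf, rfl⟩
    exact ⟨f, fun n => by obtain ⟨ν, hν, h1, h2⟩ := hf n; exact ⟨ν, hν, h1, h2⟩, rfl⟩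

theorem baireClass_one_iff [TopologicalSpace X] [TopologicalSpace Y] {f : X → Y} :
    BaireClass 1 f ↔ ∀ U : Set Y, IsOpen U → f ⁻¹' U ∈ SigmaZero X 2 := by
  rw [BaireClass, WellFounded.fix_eq]
  simp

theorem baireClass_iff [TopologicalSpace X] [TopologicalSpace Y] {ξ : Ordinal.{0}}
    (hξ : ξ ≠ 1) {f : X → Y} :
    BaireClass ξ f ↔ ∃ g : ℕ → X → Y,
      (∀ n, ∃ ν, ν < ξ ∧ 1 ≤ ν ∧ BaireClass ν (g n)) ∧
      ∀ x, Tendsto (fun n => g n x) atTop (𝓝 (f x)) := by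
  rw [BaireClass, WellFounded.fix_eq]
  simp only [hξ, if_false]
  constructor
  · rintro ⟨g, hg, h⟩
    exact ⟨g, fun n => by obtain ⟨ν, hν, h1, h2⟩ := hg n; exact ⟨ν, hν, h1, h2⟩, h⟩
  · rintro ⟨g, hg, h⟩
    exact ⟨g, fun n => by obtain ⟨ν, hν, h1, h2⟩ := hg n; exact ⟨ν, hν, h1, h2⟩, h⟩

end Aux

section Aux2
variable {X : Type*}

theorem ord_two_eq : (2 : Ordinal.{0}) = 1 + 1 := by
  norm_num

theorem ord_lt_add_one (ξ : Ordinal.{0}) : ξ < ξ + 1 := by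
  rw [Ordinal.add_one_eq_succ]; exact Order.lt_succ ξ

theorem ord_add_one_le {ν ξ : Ordinal.{0}} (h : ν < ξ) : ν + 1 ≤ ξ := by
  rw [Ordinal.add_one_eq_succ]; exact Order.succ_le_of_lt h

theorem ord_lt_add_one_iff {ν ξ : Ordinal.{0}} : ν < ξ + 1 ↔ ν ≤ ξ := by
  rw [Ordinal.add_one_eq_succ]; exact Order.lt_succ_iff

theorem ord_add_one_ne_one {ξ : Ordinal.{0}} (h : 1 ≤ ξ) : ξ + 1 ≠ 1 := by
  intro he
  have : ξ < ξ := lt_of_lt_of_le (lt_of_lt_of_le (ord_lt_add_one ξ) he.le) h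
  exact absurd this (lt_irrefl _)

theorem ord_add_one_mono {μ κ : Ordinal.{0}} (h : μ ≤ κ) : μ + 1 ≤ κ + 1 := by
  rw [Ordinal.add_one_eq_succ, Ordinal.add_one_eq_succ]; exact Order.succ_le_succ h

theorem open_mem_sigmaZero_one [TopologicalSpace X] {s : Set X} (hs : IsOpen s) :
    s ∈ SigmaZero X 1 := mem_sigmaZero_one_iff.mpr hs

/-- `Π⁰_ν ⊆ Σ⁰_ξ` for `1 ≤ ν < ξ`. -/
theorem compl_mem_sigmaZero [TopologicalSpace X] {ν ξ : Ordinal.{0}} (h1 : 1 ≤ ν)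
    (h : ν < ξ) {s : Set X} (hs : sᶜ ∈ SigmaZero X ν) : s ∈ SigmaZero X ξ := by
  have hξ : ξ ≠ 1 := by
    intro he; subst he
    exact absurd (lt_of_lt_of_le h h1) (lt_irrefl _)
  rw [mem_sigmaZero_iff hξ]
  exact ⟨fun _ => s, fun n => ⟨ν, h, h1, hs⟩, (iUnion_const s).symm⟩

/-- countable unions -/
theorem iUnion_mem_sigmaZero [TopologicalSpace X] {ξ : Ordinal.{0}} (hξ : 1 ≤ ξ)
    {f : ℕ → Set X} (hf : ∀ n, f n ∈ SigmaZero X ξ) : (⋃ n, f n) ∈ SigmaZero X ξ := by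
  by_cases h1 : ξ = 1
  · subst h1
    rw [mem_sigmaZero_one_iff]
    exact isOpen_iUnion fun n => mem_sigmaZero_one_iff.mp (hf n)
  · have hf' : ∀ n, ∃ g : ℕ → Set X,
        (∀ m, ∃ ν, ν < ξ ∧ 1 ≤ ν ∧ (g m)ᶜ ∈ SigmaZero X ν) ∧ f n = ⋃ m, g m :=
      fun n => (mem_sigmaZero_iff h1).mp (hf n)
    choose g hg hfg using hf'
    rw [mem_sigmaZero_iff h1]
    refine ⟨fun p => g (Nat.unpair p).1 (Nat.unpair p).2,
      fun p => hg _ _, ?_⟩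
    ext x
    simp only [mem_iUnion, hfg]
    constructor
    · rintro ⟨n, m, hx⟩; exact ⟨Nat.pair n m, by simpa [Nat.unpair_pair] using hx⟩
    · rintro ⟨p, hx⟩; exact ⟨(Nat.unpair p).1, (Nat.unpair p).2, hx⟩

theorem empty_mem_sigmaZero [TopologicalSpace X] {ξ : Ordinal.{0}} (hξ : 1 ≤ ξ) :
    (∅ : Set X) ∈ SigmaZero X ξ := by
  rcases eq_or_lt_of_le hξ with h | h
  · rw [← h, mem_sigmaZero_one_iff]; exact isOpen_empty
  · exact compl_mem_sigmaZero le_rfl h (by rw [compl_empty, mem_sigmaZero_one_iff]; exact isOpen_univ)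

theorem univ_mem_sigmaZero [TopologicalSpace X] {ξ : Ordinal.{0}} (hξ : 1 ≤ ξ) :
    (univ : Set X) ∈ SigmaZero X ξ := by
  rcases eq_or_lt_of_le hξ with h | h
  · rw [← h, mem_sigmaZero_one_iff]; exact isOpen_univ
  · exact compl_mem_sigmaZero le_rfl h (by rw [compl_univ, mem_sigmaZero_one_iff]; exact isOpen_empty)

theorem union_mem_sigmaZero [TopologicalSpace X] {ξ : Ordinal.{0}} (hξ : 1 ≤ ξ)
    {s t : Set X} (hs : s ∈ SigmaZero X ξ) (ht : t ∈ SigmaZero X ξ) :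
    s ∪ t ∈ SigmaZero X ξ := by
  have : s ∪ t = ⋃ n : ℕ, (if n = 0 then s else t) := by
    ext x; simp only [mem_union, mem_iUnion]
    constructor
    · rintro (h | h); exacts [⟨0, by simp [h]⟩, ⟨1, by simp [h]⟩]
    · rintro ⟨n, h⟩; by_cases h0 : n = 0 <;> simp [h0] at h <;> [left; right] <;> exact h
  rw [this]
  exact iUnion_mem_sigmaZero hξ fun n => by by_cases h0 : n = 0 <;> simp [h0, hs, ht]

end Aux2

section Aux3
variable {X : Type*}

theorem closed_eq_iInter_opens [MetricSpace X] {s : Set X} (hs : IsClosed s) :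
    ∃ U : ℕ → Set X, (∀ n, IsOpen (U n)) ∧ s = ⋂ n, U n := by
  have h := hs.isGδ
  rw [isGδ_iff_eq_iInter_nat] at h
  obtain ⟨U, hU, hs⟩ := h
  exact ⟨U, hU, hs⟩

/-- monotonicity: `Σ⁰_α ⊆ Σ⁰_β` for `1 ≤ α ≤ β` (in a metric space). -/
theorem sigmaZero_mono [MetricSpace X] {α β : Ordinal.{0}} (h1 : 1 ≤ α) (h : α ≤ β)
    {s : Set X} (hs : s ∈ SigmaZero X α) : s ∈ SigmaZero X β := by
  rcases eq_or_lt_of_le h with rfl | hlt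
  · exact hs
  by_cases hα : α = 1
  · subst hα
    have hso : IsOpen s := mem_sigmaZero_one_iff.mp hs
    obtain ⟨U, hU, hcs⟩ := closed_eq_iInter_opens (isClosed_compl_iff.mpr hso)
    have : s = ⋃ n, (U n)ᶜ := by
      rw [← compl_iInter, ← hcs, compl_compl]
    rw [this]
    exact iUnion_mem_sigmaZero (h1.trans h) fun n =>
      compl_mem_sigmaZero le_rfl (lt_of_le_of_lt h1 hlt)
        (by rw [compl_compl, mem_sigmaZero_one_iff]; exact hU n)
  · obtain ⟨f, hf, rfl⟩ := (mem_sigmaZero_iff hα).mp hs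
    have hβ : β ≠ 1 := by
      intro he; subst he
      exact absurd h1 (not_le_of_gt hlt)
    rw [mem_sigmaZero_iff hβ]
    exact ⟨f, fun n => by obtain ⟨ν, hν, hν1, hc⟩ := hf n; exact ⟨ν, hν.trans hlt, hν1, hc⟩, rfl⟩

theorem open_mem_sigmaZero [MetricSpace X] {ξ : Ordinal.{0}} (hξ : 1 ≤ ξ) {s : Set X}
    (hs : IsOpen s) : s ∈ SigmaZero X ξ :=
  sigmaZero_mono le_rfl hξ (open_mem_sigmaZero_one hs)

theorem inter_mem_sigmaZero [MetricSpace X] {ξ : Ordinal.{0}} (hξ : 1 ≤ ξ)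
    {s t : Set X} (hs : s ∈ SigmaZero X ξ) (ht : t ∈ SigmaZero X ξ) :
    s ∩ t ∈ SigmaZero X ξ := by
  by_cases h1 : ξ = 1
  · subst h1
    rw [mem_sigmaZero_one_iff] at *
    exact hs.inter ht
  · obtain ⟨f, hf, rfl⟩ := (mem_sigmaZero_iff h1).mp hs
    obtain ⟨g, hg, rfl⟩ := (mem_sigmaZero_iff h1).mp ht
    have : (⋃ n, f n) ∩ (⋃ m, g m) = ⋃ p, f (Nat.unpair p).1 ∩ g (Nat.unpair p).2 := by
      ext x
      simp only [mem_inter_iff, mem_iUnion]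
      constructor
      · rintro ⟨⟨n, hn⟩, ⟨m, hm⟩⟩
        exact ⟨Nat.pair n m, by simpa [Nat.unpair_pair] using ⟨hn, hm⟩⟩
      · rintro ⟨p, hp, hp'⟩
        exact ⟨⟨_, hp⟩, ⟨_, hp'⟩⟩
    rw [this, mem_sigmaZero_iff h1]
    refine ⟨_, fun p => ?_, rfl⟩
    obtain ⟨ν, hν, hν1, hc⟩ := hf (Nat.unpair p).1
    obtain ⟨μ, hμ, hμ1, hc'⟩ := hg (Nat.unpair p).2
    refine ⟨max ν μ, max_lt hν hμ, le_max_of_le_left hν1, ?_⟩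
    rw [compl_inter]
    exact union_mem_sigmaZero (le_max_of_le_left hν1)
      (sigmaZero_mono hν1 (le_max_left _ _) hc)
      (sigmaZero_mono hμ1 (le_max_right _ _) hc')

theorem biInter_mem_sigmaZero [MetricSpace X] {ξ : Ordinal.{0}} (hξ : 1 ≤ ξ)
    {n : ℕ} {f : ℕ → Set X} (hf : ∀ i < n, f i ∈ SigmaZero X ξ) :
    (⋂ i ∈ Finset.range n, f i) ∈ SigmaZero X ξ := by
  induction n with
  | zero => simpa using univ_mem_sigmaZero hξ
  | succ n ih =>
    rw [Finset.range_add_one, Finset.set_biInter_insert]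
    exact inter_mem_sigmaZero hξ (hf n (Nat.lt_succ_self n))
      (ih fun i hi => hf i (hi.trans (Nat.lt_succ_self n)))

theorem biUnion_mem_sigmaZero [MetricSpace X] {ξ : Ordinal.{0}} (hξ : 1 ≤ ξ)
    {n : ℕ} {f : ℕ → Set X} (hf : ∀ i < n, f i ∈ SigmaZero X ξ) :
    (⋃ i ∈ Finset.range n, f i) ∈ SigmaZero X ξ := by
  induction n with
  | zero => simpa using empty_mem_sigmaZero hξ
  | succ n ih =>
    rw [Finset.range_add_one, Finset.set_biUnion_insert]
    exact union_mem_sigmaZero hξ (hf n (Nat.lt_succ_self n))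
      (ih fun i hi => hf i (hi.trans (Nat.lt_succ_self n)))

end Aux3

section Aux4
variable {X Y : Type*}

/-- Decompose a `Π⁰_ν` set (`1 ≤ ν ≤ ξ`, `ξ > 1`) as a countable intersection of
`Δ⁰_{μ+1}` sets with `μ < ξ`. -/
theorem pi_as_inter [MetricSpace X] {ξ ν : Ordinal.{0}} (hξ : 1 < ξ) (hν1 : 1 ≤ ν)
    (hνξ : ν ≤ ξ) {D : Set X} (hD : Dᶜ ∈ SigmaZero X ν) :
    ∃ Q : ℕ → Set X, D = ⋂ m, Q m ∧
      ∀ m, ∃ μ, 1 ≤ μ ∧ μ < ξ ∧ Q m ∈ SigmaZero X (μ + 1) ∧ (Q m)ᶜ ∈ SigmaZero X (μ + 1) := by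
  by_cases h1 : ν = 1
  · subst h1
    have hDc : IsClosed D := by
      rw [← isOpen_compl_iff]; exact mem_sigmaZero_one_iff.mp hD
    obtain ⟨U, hU, hDU⟩ := closed_eq_iInter_opens hDc
    refine ⟨U, hDU, fun m => ⟨1, le_rfl, hξ, ?_, ?_⟩⟩
    · exact open_mem_sigmaZero (by rw [← ord_two_eq]; norm_num) (hU m)
    · refine compl_mem_sigmaZero le_rfl (ord_lt_add_one 1) ?_
      rw [compl_compl, mem_sigmaZero_one_iff]; exact hU m
  · obtain ⟨P, hP, hDc⟩ := (mem_sigmaZero_iff h1).mp hD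
    refine ⟨fun m => (P m)ᶜ, ?_, fun m => ?_⟩
    · rw [← compl_compl D, hDc, compl_iUnion]
    · obtain ⟨μ, hμν, hμ1, hPc⟩ := hP m
      refine ⟨μ, hμ1, lt_of_lt_of_le hμν hνξ, ?_, ?_⟩
      · exact sigmaZero_mono hμ1 (le_of_lt (ord_lt_add_one μ)) hPc
      · rw [compl_compl]
        exact compl_mem_sigmaZero hμ1 (ord_lt_add_one μ) hPc

/-- `f` is `Σ⁰_{ξ+1}`-measurable. -/
def Msble [TopologicalSpace X] [TopologicalSpace Y] (ξ : Ordinal.{0}) (f : X → Y) : Prop :=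
  ∀ U : Set Y, IsOpen U → f ⁻¹' U ∈ SigmaZero X (ξ + 1)

/-- Level sets of the least-index function of finitely many sets. -/
theorem level_set_mem [MetricSpace X] {θ : Ordinal.{0}} (hθ : 1 ≤ θ) (n : ℕ)
    {E : ℕ → Set X} (hE : ∀ i ≤ n, E i ∈ SigmaZero X θ ∧ (E i)ᶜ ∈ SigmaZero X θ) (i : ℕ) :
    {x | sInf {j | j ≤ n ∧ x ∈ E j} = i} ∈ SigmaZero X θ := by
  rcases Nat.eq_zero_or_pos i with rfl | hi
  · have : {x | sInf {j | j ≤ n ∧ x ∈ E j} = 0} =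
        E 0 ∪ ⋂ l ∈ Finset.range (n + 1), (E l)ᶜ := by
      ext x
      simp only [mem_setOf_eq, mem_union, mem_iInter, Finset.mem_range, mem_compl_iff]
      constructor
      · intro h
        by_cases hne : ({j | j ≤ n ∧ x ∈ E j} : Set ℕ).Nonempty
        · left
          have := Nat.sInf_mem hne
          rw [h] at this
          exact this.2
        · right
          intro l hl hxl
          exact hne ⟨l, Nat.lt_succ_iff.mp hl, hxl⟩
      · rintro (h | h)
        · have h0 : 0 ∈ {j | j ≤ n ∧ x ∈ E j} := ⟨Nat.zero_le n, h⟩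
          exact Nat.le_antisymm (Nat.sInf_le h0) (Nat.zero_le _)
        · have : {j | j ≤ n ∧ x ∈ E j} = ∅ := by
            ext l; simp only [mem_setOf_eq, mem_empty_iff_false, iff_false, not_and]
            intro hl hxl
            exact h l (Nat.lt_succ_iff.mpr hl) hxl
          rw [this, Nat.sInf_empty]
    rw [this]
    exact union_mem_sigmaZero hθ (hE 0 (Nat.zero_le n)).1
      (biInter_mem_sigmaZero hθ fun l hl => (hE l (Nat.lt_succ_iff.mp hl)).2)
  · by_cases hin : i ≤ n
    · have : {x | sInf {j | j ≤ n ∧ x ∈ E j} = i} =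
          E i ∩ ⋂ l ∈ Finset.range i, (E l)ᶜ := by
        ext x
        simp only [mem_setOf_eq, mem_inter_iff, mem_iInter, Finset.mem_range, mem_compl_iff]
        constructor
        · intro h
          have hne : ({j | j ≤ n ∧ x ∈ E j} : Set ℕ).Nonempty := by
            by_contra hne
            rw [not_nonempty_iff_eq_empty.mp hne, Nat.sInf_empty] at h
            omega
          have hmem := Nat.sInf_mem hne
          rw [h] at hmem
          refine ⟨hmem.2, fun l hl hxl => ?_⟩
          have : sInf {j | j ≤ n ∧ x ∈ E j} ≤ l := Nat.sInf_le ⟨le_trans (le_of_lt hl) hin, hxl⟩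
          omega
        · rintro ⟨hxi, h⟩
          have hmem : i ∈ {j | j ≤ n ∧ x ∈ E j} := ⟨hin, hxi⟩
          have h1 : sInf {j | j ≤ n ∧ x ∈ E j} ≤ i := Nat.sInf_le hmem
          have h2 : ¬ sInf {j | j ≤ n ∧ x ∈ E j} < i := by
            intro hlt
            have := Nat.sInf_mem ⟨i, hmem⟩
            exact h _ hlt this.2
          omega
      rw [this]
      exact inter_mem_sigmaZero hθ (hE i hin).1
        (biInter_mem_sigmaZero hθ fun l hl => (hE l (le_trans (Nat.lt_succ_iff.mp (by omega)) hin)).2)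
    · have : {x | sInf {j | j ≤ n ∧ x ∈ E j} = i} = ∅ := by
        ext x
        simp only [mem_setOf_eq, mem_empty_iff_false, iff_false]
        intro h
        by_cases hne : ({j | j ≤ n ∧ x ∈ E j} : Set ℕ).Nonempty
        · have := Nat.sInf_mem hne
          rw [h] at this
          exact hin this.1
        · rw [not_nonempty_iff_eq_empty.mp hne, Nat.sInf_empty] at h
          omega
      rw [this]
      exact empty_mem_sigmaZero hθ

theorem csInf_le_n {n : ℕ} {E : ℕ → Set X} (x : X) :
    sInf {j | j ≤ n ∧ x ∈ E j} ≤ n := by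
  by_cases hne : ({j | j ≤ n ∧ x ∈ E j} : Set ℕ).Nonempty
  · exact (Nat.sInf_mem hne).1
  · rw [not_nonempty_iff_eq_empty.mp hne, Nat.sInf_empty]; exact Nat.zero_le n

/-- Stabilization of the stage-index functions. -/
theorem stage_stab {Q : ℕ → ℕ → Set X} (hcov : (⋃ i, ⋂ m, Q i m) = Set.univ) (x : X) :
    ∃ i₀, x ∈ (⋂ m, Q i₀ m) ∧ ∃ N, ∀ n ≥ N,
      sInf {i | i ≤ n ∧ x ∈ ⋂ m ∈ Finset.range (n + 1), Q i m} = i₀ := by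
  have hx : x ∈ ⋃ i, ⋂ m, Q i m := by rw [hcov]; exact mem_univ x
  rw [mem_iUnion] at hx
  have hne : ({i | x ∈ ⋂ m, Q i m} : Set ℕ).Nonempty := hx
  set i₀ := sInf {i | x ∈ ⋂ m, Q i m} with hi₀
  have hmem : x ∈ ⋂ m, Q i₀ m := Nat.sInf_mem hne
  have hlow : ∀ i < i₀, ∃ m, x ∉ Q i m := by
    intro i hi
    have : i ∉ {i | x ∈ ⋂ m, Q i m} := Nat.notMem_of_lt_sInf hi
    simpa [mem_iInter] using this
  have hch : ∀ i, ∃ m, i < i₀ → x ∉ Q i m := by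
    intro i
    by_cases hi : i < i₀
    · obtain ⟨m, hm⟩ := hlow i hi
      exact ⟨m, fun _ => hm⟩
    · exact ⟨0, fun h => absurd h hi⟩
  choose mf hmf using hch
  refine ⟨i₀, hmem, max i₀ ((Finset.range i₀).sup mf), fun n hn => ?_⟩
  have hni₀ : i₀ ≤ n := le_trans (le_max_left _ _) hn
  have hin : i₀ ∈ {i | i ≤ n ∧ x ∈ ⋂ m ∈ Finset.range (n + 1), Q i m} := by
    refine ⟨hni₀, ?_⟩
    simp only [mem_iInter]
    intro m _
    exact mem_iInter.mp hmem m
  have h1 : sInf {i | i ≤ n ∧ x ∈ ⋂ m ∈ Finset.range (n + 1), Q i m} ≤ i₀ := Nat.sInf_le hin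
  have h2 : ¬ sInf {i | i ≤ n ∧ x ∈ ⋂ m ∈ Finset.range (n + 1), Q i m} < i₀ := by
    intro hlt
    have hm := Nat.sInf_mem ⟨i₀, hin⟩
    set l := sInf {i | i ≤ n ∧ x ∈ ⋂ m ∈ Finset.range (n + 1), Q i m}
    have hxl : x ∈ ⋂ m ∈ Finset.range (n + 1), Q l m := hm.2
    have hmfl : mf l ≤ n := by
      have : mf l ≤ (Finset.range i₀).sup mf := Finset.le_sup (Finset.mem_range.mpr hlt)
      exact le_trans this (le_trans (le_max_right _ _) hn)
    have := mem_iInter₂.mp hxl (mf l) (Finset.mem_range.mpr (Nat.lt_succ_iff.mpr hmfl))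
    exact hmf l hlt this
  omega

theorem empty_baireClass [TopologicalSpace X] [TopologicalSpace Y] [IsEmpty X]
    {ξ : Ordinal.{0}} (hξ : 1 ≤ ξ) (f : X → Y) : BaireClass ξ f := by
  induction ξ using Ordinal.induction with
  | h ξ ih =>
    by_cases h1 : ξ = 1
    · subst h1
      rw [baireClass_one_iff]
      intro U _
      rw [Set.eq_empty_of_isEmpty (f ⁻¹' U)]
      exact empty_mem_sigmaZero (by rw [ord_two_eq]; exact le_of_lt (ord_lt_add_one 1))
    · rw [baireClass_iff h1]
      refine ⟨fun _ => f, fun n => ⟨1, lt_of_le_of_ne hξ (Ne.symm h1), le_rfl, ih 1 (lt_of_le_of_ne hξ (Ne.symm h1)) le_rfl⟩, fun x => (IsEmpty.elim ‹IsEmpty X› x)⟩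

end Aux4

section Aux5
variable {X Y : Type*}

/-- A function constant on the pieces of a countable partition into `Σ⁰_{ξ+1}`
sets is of Baire class `ξ`. -/
theorem simple_baire [MetricSpace X] [MetricSpace Y] (ξ : Ordinal.{0}) :
    ∀ (g : X → Y) (A : ℕ → Set X) (y : ℕ → Y), 1 ≤ ξ →
    (∀ i j, i ≠ j → Disjoint (A i) (A j)) → (⋃ i, A i) = Set.univ →
    (∀ i, A i ∈ SigmaZero X (ξ + 1)) → (∀ i, ∀ x ∈ A i, g x = y i) →
    BaireClass ξ g := by
  classical
  induction ξ using Ordinal.induction with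
  | h ξ ih =>
    intro g A y hξ hdis hcov hmem hval
    by_cases h1 : ξ = 1
    · subst h1
      rw [baireClass_one_iff]
      intro U hU
      have heq : g ⁻¹' U = ⋃ i, if A i ⊆ g ⁻¹' U then A i else ∅ := by
        ext x
        simp only [mem_iUnion, mem_preimage]
        constructor
        · intro hx
          have hxA : x ∈ ⋃ i, A i := by rw [hcov]; exact mem_univ x
          obtain ⟨i, hxi⟩ := mem_iUnion.mp hxA
          have hsub : A i ⊆ g ⁻¹' U := by
            intro x' hx'
            rw [mem_preimage, hval i x' hx', ← hval i x hxi]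
            exact hx
          exact ⟨i, by rw [if_pos hsub]; exact hxi⟩
        · rintro ⟨i, hxi⟩
          by_cases hsub : A i ⊆ g ⁻¹' U
          · rw [if_pos hsub] at hxi
            exact hsub hxi
          · rw [if_neg hsub] at hxi
            exact absurd hxi (notMem_empty x)
      rw [heq, ord_two_eq]
      refine iUnion_mem_sigmaZero (le_of_lt (ord_lt_add_one 1)) fun i => ?_
      by_cases hsub : A i ⊆ g ⁻¹' U
      · rw [if_pos hsub]; exact hmem i
      · rw [if_neg hsub]; exact empty_mem_sigmaZero (le_of_lt (ord_lt_add_one 1))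
    · have hξlt : 1 < ξ := lt_of_le_of_ne hξ (Ne.symm h1)
      have hdec : ∀ i, ∃ d : ℕ → Set X,
          (∀ m, ∃ ν, ν < ξ + 1 ∧ 1 ≤ ν ∧ (d m)ᶜ ∈ SigmaZero X ν) ∧ A i = ⋃ m, d m :=
        fun i => (mem_sigmaZero_iff (ord_add_one_ne_one hξ)).mp (hmem i)
      choose d hd hAd using hdec
      have hQex : ∀ i m, ∃ Q : ℕ → Set X, d i m = ⋂ r, Q r ∧
          ∀ r, ∃ μ, 1 ≤ μ ∧ μ < ξ ∧ Q r ∈ SigmaZero X (μ + 1) ∧ (Q r)ᶜ ∈ SigmaZero X (μ + 1) := by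
        intro i m
        obtain ⟨ν, hν, hν1, hc⟩ := hd i m
        exact pi_as_inter hξlt hν1 (ord_lt_add_one_iff.mp hν) hc
      choose Q hQd hQprop using hQex
      choose μf hμ1 hμξ hQmem hQcmem using fun i m => hQprop i m
      set P : ℕ → ℕ → Set X := fun i r => Q (Nat.unpair i).1 (Nat.unpair i).2 r with hP
      set w : ℕ → Y := fun i => y (Nat.unpair i).1 with hw
      set μ' : ℕ → ℕ → Ordinal.{0} := fun i r => μf (Nat.unpair i).1 (Nat.unpair i).2 r with hμ'
      have hcov' : (⋃ i, ⋂ r, P i r) = Set.univ := by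
        rw [eq_univ_iff_forall]
        intro x
        have hxA : x ∈ ⋃ i, A i := by rw [hcov]; exact mem_univ x
        obtain ⟨i, hxi⟩ := mem_iUnion.mp hxA
        rw [hAd i] at hxi
        obtain ⟨m, hxm⟩ := mem_iUnion.mp hxi
        refine mem_iUnion.mpr ⟨Nat.pair i m, ?_⟩
        have : (⋂ r, P (Nat.pair i m) r) = d i m := by
          simp only [hP, Nat.unpair_pair, ← hQd]
        rw [this]
        exact hxm
      have hval' : ∀ i, ∀ x ∈ (⋂ r, P i r), g x = w i := by
        intro i x hx
        apply hval (Nat.unpair i).1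
        rw [hAd]
        refine mem_iUnion.mpr ⟨(Nat.unpair i).2, ?_⟩
        rw [hQd]
        exact hx
      -- stage index functions
      set c : ℕ → X → ℕ :=
        fun n x => sInf {i | i ≤ n ∧ x ∈ ⋂ r ∈ Finset.range (n + 1), P i r} with hc
      set gfun : ℕ → X → Y := fun n x => w (c n x) with hgfun
      -- convergence
      have hconv : ∀ x, Tendsto (fun n => gfun n x) atTop (𝓝 (g x)) := by
        intro x
        obtain ⟨i₀, hxi₀, N, hN⟩ := stage_stab hcov' x
        refine tendsto_atTop_of_eventually_const (i₀ := N) fun n hn => ?_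
        simp only [hgfun, hc, hN n hn]
        exact (hval' i₀ x hxi₀).symm
      -- class of each stage function
      have hclass : ∀ n, ∃ κ, κ < ξ ∧ 1 ≤ κ ∧ BaireClass κ (gfun n) := by
        intro n
        set T : Finset (ℕ × ℕ) := Finset.range (n + 1) ×ˢ Finset.range (n + 1) with hT
        set κ : Ordinal.{0} := T.sup fun p => μ' p.1 p.2 with hκ
        have hκ1 : 1 ≤ κ := by
          refine le_trans (hμ1 0 0 0) ?_
          have h00 : ((0 : ℕ), (0 : ℕ)) ∈ T := by
            simp [hT]
          have := Finset.le_sup (f := fun p : ℕ × ℕ => μ' p.1 p.2) h00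
          simpa [hμ'] using this
        have hκξ : κ < ξ := by
          rw [hκ, Finset.sup_lt_iff (by rw [Ordinal.bot_eq_zero]; exact lt_of_lt_of_le zero_lt_one hξ)]
          intro p _
          exact hμξ _ _ _
        have hμκ : ∀ i ≤ n, ∀ r ≤ n, μ' i r ≤ κ := by
          intro i hi r hr
          refine Finset.le_sup (f := fun p : ℕ × ℕ => μ' p.1 p.2) (?_ : (i, r) ∈ T)
          simp [hT, Nat.lt_succ_iff, hi, hr]
        set E : ℕ → Set X := fun i => ⋂ r ∈ Finset.range (n + 1), P i r with hE
        have hκ1' : (1 : Ordinal.{0}) ≤ κ + 1 := le_trans hκ1 (le_of_lt (ord_lt_add_one κ))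
        have hEmem : ∀ i ≤ n, E i ∈ SigmaZero X (κ + 1) ∧ (E i)ᶜ ∈ SigmaZero X (κ + 1) := by
          intro i hi
          constructor
          · exact biInter_mem_sigmaZero hκ1' fun r hr =>
              sigmaZero_mono (le_trans (hμ1 _ _ _) (le_of_lt (ord_lt_add_one _)))
                (ord_add_one_mono (hμκ i hi r (Nat.lt_succ_iff.mp hr))) (hQmem _ _ r)
          · have : (E i)ᶜ = ⋃ r ∈ Finset.range (n + 1), (P i r)ᶜ := by
              simp [hE, compl_iInter]
            rw [this]
            exact biUnion_mem_sigmaZero hκ1' fun r hr =>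
              sigmaZero_mono (le_trans (hμ1 _ _ _) (le_of_lt (ord_lt_add_one _)))
                (ord_add_one_mono (hμκ i hi r (Nat.lt_succ_iff.mp hr))) (hQcmem _ _ r)
        set B : ℕ → Set X := fun i => if i ≤ n then {x | c n x = i} else ∅ with hB
        refine ⟨κ, hκξ, hκ1, ih κ hκξ (gfun n) B w hκ1 ?_ ?_ ?_ ?_⟩
        · intro i j hij
          rw [Set.disjoint_left]
          intro x hxi hxj
          by_cases hi : i ≤ n
          · by_cases hj : j ≤ n
            · rw [hB] at hxi hxj
              simp only [if_pos hi] at hxi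
              simp only [if_pos hj] at hxj
              exact hij (hxi.symm.trans hxj)
            · simp only [hB, if_neg hj] at hxj
              exact absurd hxj (notMem_empty x)
          · simp only [hB, if_neg hi] at hxi
            exact absurd hxi (notMem_empty x)
        · rw [eq_univ_iff_forall]
          intro x
          refine mem_iUnion.mpr ⟨c n x, ?_⟩
          have hcn : c n x ≤ n := csInf_le_n x
          simp only [hB, if_pos hcn]
          exact rfl
        · intro i
          by_cases hi : i ≤ n
          · simp only [hB, if_pos hi]
            exact level_set_mem hκ1' n hEmem i
          · simp only [hB, if_neg hi]
            exact empty_mem_sigmaZero hκ1'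
        · intro i x hx
          by_cases hi : i ≤ n
          · simp only [hB, if_pos hi, mem_setOf_eq] at hx
            simp only [hgfun, hx]
          · simp only [hB, if_neg hi] at hx
            exact absurd hx (notMem_empty x)
      rw [baireClass_iff h1]
      exact ⟨gfun, hclass, hconv⟩

end Aux5

section Aux6
variable {X Y : Type*}

theorem baire_msble [MetricSpace X] [MetricSpace Y] (ξ : Ordinal.{0}) :
    ∀ f : X → Y, 1 ≤ ξ → BaireClass ξ f → Msble ξ f := by
  induction ξ using Ordinal.induction with
  | h ξ ih =>
    intro f hξ hb U hU
    by_cases h1 : ξ = 1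
    · subst h1
      rw [baireClass_one_iff] at hb
      have := hb U hU
      rwa [ord_two_eq] at this
    · obtain ⟨g, hg, hlim⟩ := (baireClass_iff h1).mp hb
      by_cases hUuniv : U = Set.univ
      · subst hUuniv
        rw [preimage_univ]
        exact univ_mem_sigmaZero (le_trans hξ (le_of_lt (ord_lt_add_one ξ)))
      have hUc : Uᶜ.Nonempty := nonempty_compl.mpr hUuniv
      choose νf hνlt hν1 hgb using hg
      have hgM : ∀ n, Msble (νf n) (g n) := fun n => ih (νf n) (hνlt n) (g n) (hν1 n) (hgb n)
      set F : ℕ → Set X := fun p => ⋂ j : ℕ,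
        g (j + (Nat.unpair p).2) ⁻¹' {y | (1:ℝ)/((Nat.unpair p).1+1) ≤ Metric.infDist y Uᶜ}
        with hF
      have heq : f ⁻¹' U = ⋃ p, F p := by
        ext x
        simp only [hF, mem_preimage, mem_iUnion, mem_iInter, mem_setOf_eq]
        constructor
        · intro hx
          have hδ : 0 < Metric.infDist (f x) Uᶜ := by
            rw [← (hU.isClosed_compl.notMem_iff_infDist_pos hUc)]
            simpa using hx
          obtain ⟨m, hm⟩ := exists_nat_one_div_lt (half_pos hδ)
          obtain ⟨N, hN⟩ := (Metric.tendsto_atTop.mp (hlim x)) (1/(m+1))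
            (by positivity)
          refine ⟨Nat.pair m N, ?_⟩
          intro j
          simp only [Nat.unpair_pair]
          have h1 := Metric.infDist_le_infDist_add_dist
            (x := f x) (y := g (j + N) x) (s := Uᶜ)
          have h2 : dist (f x) (g (j + N) x) < 1/(m+1) := by
            rw [dist_comm]
            exact hN (j + N) (Nat.le_add_left N j)
          have hm' : (1:ℝ)/(m+1) < Metric.infDist (f x) Uᶜ / 2 := hm
          linarith
        · rintro ⟨p, hp⟩
          set m := (Nat.unpair p).1
          set N := (Nat.unpair p).2
          have htd : Tendsto (fun j => Metric.infDist (g (j + N) x) Uᶜ) atTop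
              (𝓝 (Metric.infDist (f x) Uᶜ)) :=
            ((Metric.continuous_infDist_pt Uᶜ).tendsto (f x)).comp
              ((hlim x).comp (tendsto_add_atTop_nat N))
          have hle : (1:ℝ)/(m+1) ≤ Metric.infDist (f x) Uᶜ :=
            ge_of_tendsto htd (Eventually.of_forall hp)
          have hpos : 0 < Metric.infDist (f x) Uᶜ := lt_of_lt_of_le (by positivity) hle
          by_contra hxU
          rw [Metric.infDist_zero_of_mem (by simpa using hxU)] at hpos
          exact lt_irrefl 0 hpos
      rw [heq, mem_sigmaZero_iff (ord_add_one_ne_one hξ)]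
      refine ⟨F, fun p => ⟨ξ, ord_lt_add_one ξ, hξ, ?_⟩, rfl⟩
      have hcompl : (F p)ᶜ = ⋃ j : ℕ,
          g (j + (Nat.unpair p).2) ⁻¹' {y | Metric.infDist y Uᶜ < (1:ℝ)/((Nat.unpair p).1+1)} := by
        ext x
        simp only [hF, compl_iInter, mem_iUnion, mem_compl_iff, mem_preimage, mem_setOf_eq, not_le]
      rw [hcompl]
      refine iUnion_mem_sigmaZero hξ fun j => ?_
      have hopen : IsOpen {y : Y | Metric.infDist y Uᶜ < (1:ℝ)/((Nat.unpair p).1+1)} :=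
        isOpen_lt (Metric.continuous_infDist_pt Uᶜ) continuous_const
      have := hgM (j + (Nat.unpair p).2) _ hopen
      exact sigmaZero_mono (le_trans (hν1 _) (le_of_lt (ord_lt_add_one _)))
        (ord_add_one_le (hνlt _)) this

theorem uniform_msble [MetricSpace X] [MetricSpace Y] {ξ : Ordinal.{0}} (hξ : 1 ≤ ξ)
    {g : ℕ → X → Y} {f : X → Y} (hg : ∀ k, Msble ξ (g k))
    (hu : TendstoUniformly g f atTop) : Msble ξ f := by
  intro U hU
  by_cases hUuniv : U = Set.univ
  · subst hUuniv
    rw [preimage_univ]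
    exact univ_mem_sigmaZero (le_trans hξ (le_of_lt (ord_lt_add_one ξ)))
  have hUc : Uᶜ.Nonempty := nonempty_compl.mpr hUuniv
  have hm : ∀ m : ℕ, ∃ k, ∀ x, dist (f x) (g k x) < 1/(2*(m+1)) := by
    intro m
    exact ((Metric.tendstoUniformly_iff.mp hu) (1/(2*(m+1))) (by positivity)).exists
  choose k hk using hm
  have heq : f ⁻¹' U = ⋃ m, g (k m) ⁻¹' {y | (1:ℝ)/(m+1) < Metric.infDist y Uᶜ} := by
    ext x
    simp only [mem_preimage, mem_iUnion, mem_setOf_eq]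
    constructor
    · intro hx
      have hδ : 0 < Metric.infDist (f x) Uᶜ := by
        rw [← (hU.isClosed_compl.notMem_iff_infDist_pos hUc)]
        simpa using hx
      obtain ⟨m, hmδ⟩ := exists_nat_one_div_lt (half_pos hδ)
      refine ⟨m, ?_⟩
      have h1 := Metric.infDist_le_infDist_add_dist (x := f x) (y := g (k m) x) (s := Uᶜ)
      have h2 := hk m x
      have : (1:ℝ)/(2*(m+1)) = (1/(m+1))/2 := by rw [div_div, mul_comm]
      rw [this] at h2
      linarith
    · rintro ⟨m, hx⟩
      have h1 := Metric.infDist_le_infDist_add_dist (x := g (k m) x) (y := f x) (s := Uᶜ)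
      have h2 := hk m x
      rw [dist_comm] at h2
      have : (1:ℝ)/(2*(m+1)) = (1/(m+1))/2 := by rw [div_div, mul_comm]
      rw [this] at h2
      have hpos : 0 < Metric.infDist (f x) Uᶜ := by
        have hmp : (0:ℝ) < 1/(m+1) := by positivity
        linarith
      by_contra hxU
      rw [Metric.infDist_zero_of_mem (by simpa using hxU)] at hpos
      exact lt_irrefl 0 hpos
  rw [heq]
  refine iUnion_mem_sigmaZero (le_trans hξ (le_of_lt (ord_lt_add_one ξ))) fun m => ?_
  exact hg (k m) _ (isOpen_lt continuous_const (Metric.continuous_infDist_pt Uᶜ))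

theorem deltaFun_msble [MetricSpace X] [MetricSpace Y] {ξ : Ordinal.{0}} (hξ : 1 ≤ ξ)
    {h : X → Y} (hd : IsDeltaFun (ξ + 1) h) : Msble ξ h := fun U hU =>
  hd U (open_mem_sigmaZero (le_trans hξ (le_of_lt (ord_lt_add_one ξ))) hU)

end Aux6

section Aux7
variable {X Y : Type*}

theorem msble_approx [MetricSpace X] [MetricSpace Y] [SeparableSpace Y] [Nonempty Y]
    {ξ : Ordinal.{0}} (hξ : 1 ≤ ξ) {f : X → Y} (hf : Msble ξ f) {ε : ℝ} (hε : 0 < ε) :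
    ∃ (A : ℕ → Set X) (y : ℕ → Y),
      (∀ i j, i ≠ j → Disjoint (A i) (A j)) ∧ (⋃ i, A i) = Set.univ ∧
      (∀ i, A i ∈ SigmaZero X (ξ + 1)) ∧ (∀ i, ∀ x ∈ A i, dist (f x) (y i) < ε) := by
  set u := denseSeq Y with hu
  set B : ℕ → Set X := fun j => f ⁻¹' Metric.ball (u j) ε with hB
  have hBmem : ∀ j, B j ∈ SigmaZero X (ξ + 1) := fun j => hf _ Metric.isOpen_ball
  have hBcov : (⋃ j, B j) = Set.univ := by
    rw [eq_univ_iff_forall]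
    intro x
    obtain ⟨j, hj⟩ := Metric.denseRange_iff.mp (denseRange_denseSeq Y) (f x) ε hε
    exact mem_iUnion.mpr ⟨j, by simpa [hB, Metric.mem_ball, dist_comm] using hj⟩
  have hdec : ∀ j, ∃ d : ℕ → Set X,
      (∀ m, ∃ ν, ν < ξ + 1 ∧ 1 ≤ ν ∧ (d m)ᶜ ∈ SigmaZero X ν) ∧ B j = ⋃ m, d m :=
    fun j => (mem_sigmaZero_iff (ord_add_one_ne_one hξ)).mp (hBmem j)
  choose d hd hBd using hdec
  set D : ℕ → Set X := fun i => d (Nat.unpair i).1 (Nat.unpair i).2 with hD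
  set y : ℕ → Y := fun i => u (Nat.unpair i).1 with hy
  have hDmem : ∀ i, D i ∈ SigmaZero X (ξ + 1) := by
    intro i
    obtain ⟨ν, hν, hν1, hc⟩ := hd (Nat.unpair i).1 (Nat.unpair i).2
    exact compl_mem_sigmaZero hν1 hν hc
  have hDcmem : ∀ i, (D i)ᶜ ∈ SigmaZero X (ξ + 1) := by
    intro i
    obtain ⟨ν, hν, hν1, hc⟩ := hd (Nat.unpair i).1 (Nat.unpair i).2
    exact sigmaZero_mono hν1 (le_of_lt hν) hc
  have hDsub : ∀ i, D i ⊆ B (Nat.unpair i).1 := by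
    intro i
    rw [hBd]
    exact subset_iUnion (fun m => d (Nat.unpair i).1 m) (Nat.unpair i).2
  have hDcov : (⋃ i, D i) = Set.univ := by
    rw [eq_univ_iff_forall]
    intro x
    have : x ∈ ⋃ j, B j := by rw [hBcov]; exact mem_univ x
    obtain ⟨j, hj⟩ := mem_iUnion.mp this
    rw [hBd] at hj
    obtain ⟨m, hm⟩ := mem_iUnion.mp hj
    exact mem_iUnion.mpr ⟨Nat.pair j m, by simpa [hD, Nat.unpair_pair] using hm⟩
  set A : ℕ → Set X := fun i => D i ∩ ⋂ l ∈ Finset.range i, (D l)ᶜ with hA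
  have h1' : (1:Ordinal.{0}) ≤ ξ + 1 := le_trans hξ (le_of_lt (ord_lt_add_one ξ))
  have hkey : ∀ i j, i < j → Disjoint (A i) (A j) := by
    intro i j hij
    rw [Set.disjoint_left]
    intro x hxi hxj
    have hxD : x ∈ D i := hxi.1
    have : x ∈ (D i)ᶜ := mem_iInter₂.mp hxj.2 i (Finset.mem_range.mpr hij)
    exact this hxD
  refine ⟨A, y, ?_, ?_, ?_, ?_⟩
  · intro i j hij
    rcases lt_or_gt_of_ne hij with h | h
    · exact hkey i j h
    · exact (hkey j i h).symm
  · rw [eq_univ_iff_forall]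
    intro x
    have hne : ({i | x ∈ D i} : Set ℕ).Nonempty := by
      have : x ∈ ⋃ i, D i := by rw [hDcov]; exact mem_univ x
      exact mem_iUnion.mp this
    refine mem_iUnion.mpr ⟨sInf {i | x ∈ D i}, Nat.sInf_mem hne, ?_⟩
    refine mem_iInter₂.mpr fun l hl => ?_
    exact Nat.notMem_of_lt_sInf (Finset.mem_range.mp hl)
  · intro i
    exact inter_mem_sigmaZero h1' (hDmem i)
      (biInter_mem_sigmaZero h1' fun l _ => hDcmem l)
  · intro i x hx
    have : f x ∈ Metric.ball (u (Nat.unpair i).1) ε := hDsub i hx.1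
    simpa [hy, Metric.mem_ball, dist_comm] using this

theorem msble_crux_data [MetricSpace X] [MetricSpace Y] [SeparableSpace Y] [Nonempty Y]
    {ξ : Ordinal.{0}} (hξ : 1 < ξ) {f : X → Y} (hf : Msble ξ f) {ε : ℝ} (hε : 0 < ε) :
    ∃ (Q : ℕ → ℕ → Set X) (w : ℕ → Y) (μ : ℕ → ℕ → Ordinal.{0}),
      (⋃ i, ⋂ m, Q i m) = Set.univ ∧
      (∀ i, ∀ x ∈ (⋂ m, Q i m), dist (f x) (w i) < ε) ∧
      (∀ i m, 1 ≤ μ i m ∧ μ i m < ξ ∧ Q i m ∈ SigmaZero X (μ i m + 1) ∧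
        (Q i m)ᶜ ∈ SigmaZero X (μ i m + 1)) := by
  have hξ1 : 1 ≤ ξ := le_of_lt hξ
  set u := denseSeq Y with hu
  set B : ℕ → Set X := fun j => f ⁻¹' Metric.ball (u j) ε with hB
  have hBmem : ∀ j, B j ∈ SigmaZero X (ξ + 1) := fun j => hf _ Metric.isOpen_ball
  have hBcov : (⋃ j, B j) = Set.univ := by
    rw [eq_univ_iff_forall]
    intro x
    obtain ⟨j, hj⟩ := Metric.denseRange_iff.mp (denseRange_denseSeq Y) (f x) ε hε
    exact mem_iUnion.mpr ⟨j, by simpa [hB, Metric.mem_ball, dist_comm] using hj⟩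
  have hdec : ∀ j, ∃ d : ℕ → Set X,
      (∀ m, ∃ ν, ν < ξ + 1 ∧ 1 ≤ ν ∧ (d m)ᶜ ∈ SigmaZero X ν) ∧ B j = ⋃ m, d m :=
    fun j => (mem_sigmaZero_iff (ord_add_one_ne_one hξ1)).mp (hBmem j)
  choose d hd hBd using hdec
  set D : ℕ → Set X := fun i => d (Nat.unpair i).1 (Nat.unpair i).2 with hD
  set w : ℕ → Y := fun i => u (Nat.unpair i).1 with hw
  have hQex : ∀ i, ∃ Q : ℕ → Set X, D i = ⋂ m, Q m ∧
      ∀ m, ∃ μ, 1 ≤ μ ∧ μ < ξ ∧ Q m ∈ SigmaZero X (μ + 1) ∧ (Q m)ᶜ ∈ SigmaZero X (μ + 1) := by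
    intro i
    obtain ⟨ν, hν, hν1, hc⟩ := hd (Nat.unpair i).1 (Nat.unpair i).2
    exact pi_as_inter hξ hν1 (ord_lt_add_one_iff.mp hν) hc
  choose Q hQD hQprop using hQex
  choose μf hμ1 hμξ hQmem hQcmem using fun i => hQprop i
  refine ⟨Q, w, μf, ?_, ?_, fun i m => ⟨hμ1 i m, hμξ i m, hQmem i m, hQcmem i m⟩⟩
  · rw [eq_univ_iff_forall]
    intro x
    have : x ∈ ⋃ j, B j := by rw [hBcov]; exact mem_univ x
    obtain ⟨j, hj⟩ := mem_iUnion.mp this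
    rw [hBd] at hj
    obtain ⟨m, hm⟩ := mem_iUnion.mp hj
    refine mem_iUnion.mpr ⟨Nat.pair j m, ?_⟩
    rw [← hQD]
    simpa [hD, Nat.unpair_pair] using hm
  · intro i x hx
    rw [← hQD] at hx
    have hsub : D i ⊆ B (Nat.unpair i).1 := by
      rw [hBd]
      exact subset_iUnion (fun m => d (Nat.unpair i).1 m) (Nat.unpair i).2
    have : f x ∈ Metric.ball (u (Nat.unpair i).1) ε := hsub hx
    simpa [hw, Metric.mem_ball, dist_comm] using this

theorem dist_chain [MetricSpace Y] {u : ℕ → Y} {a : ℕ} : ∀ b, a ≤ b →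
    (∀ j, a ≤ j → j < b → dist (u j) (u (j+1)) < 2 * (1/2:ℝ)^j) →
    dist (u a) (u b) ≤ 4 * (1/2:ℝ)^a - 4 * (1/2:ℝ)^b := by
  intro b
  induction b with
  | zero =>
    intro hab _
    interval_cases a
    simp
  | succ b ihb =>
    intro hab hch
    rcases Nat.lt_or_ge a (b+1) with h | h
    · have hab' : a ≤ b := Nat.lt_succ_iff.mp h
      have h1 := ihb hab' fun j hj hjb => hch j hj (hjb.trans (Nat.lt_succ_self b))
      have h2 := hch b hab' (Nat.lt_succ_self b)
      have h3 : dist (u a) (u (b+1)) ≤ dist (u a) (u b) + dist (u b) (u (b+1)) :=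
        dist_triangle _ _ _
      have h4 : (4:ℝ) * (1/2:ℝ)^(b+1) = 2 * (1/2:ℝ)^b := by
        rw [pow_succ]; ring
      rw [h4]
      linarith
    · have : a = b + 1 := le_antisymm hab h
      subst this
      simp
end Aux7

section Aux8
variable {X Y : Type*}

theorem msble_baire [MetricSpace X] [MetricSpace Y] [SeparableSpace Y]
    {ξ : Ordinal.{0}} (hξ : 1 ≤ ξ) {f : X → Y} (hf : Msble ξ f) : BaireClass ξ f := by
  classical
  by_cases h1 : ξ = 1
  · subst h1
    rw [baireClass_one_iff]
    intro U hU
    have := hf U hU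
    rwa [← ord_two_eq] at this
  have hξlt : 1 < ξ := lt_of_le_of_ne hξ (Ne.symm h1)
  cases isEmpty_or_nonempty X with
  | inl hX => exact empty_baireClass hξ f
  | inr hX =>
    have hY : Nonempty Y := ⟨f (Classical.arbitrary X)⟩
    have hdat : ∀ k : ℕ, ∃ (Q : ℕ → ℕ → Set X) (w : ℕ → Y) (μ : ℕ → ℕ → Ordinal.{0}),
        (⋃ i, ⋂ m, Q i m) = Set.univ ∧
        (∀ i, ∀ x ∈ (⋂ m, Q i m), dist (f x) (w i) < (1/2:ℝ)^k) ∧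
        (∀ i m, 1 ≤ μ i m ∧ μ i m < ξ ∧ Q i m ∈ SigmaZero X (μ i m + 1) ∧
          (Q i m)ᶜ ∈ SigmaZero X (μ i m + 1)) :=
      fun k => msble_crux_data hξlt hf (by positivity)
    choose Q w μf hcov hdist hprop using hdat
    have hμ1 : ∀ k i m, 1 ≤ μf k i m := fun k i m => (hprop k i m).1
    have hμξ : ∀ k i m, μf k i m < ξ := fun k i m => (hprop k i m).2.1
    have hQmem : ∀ k i m, Q k i m ∈ SigmaZero X (μf k i m + 1) := fun k i m => (hprop k i m).2.2.1
    have hQcmem : ∀ k i m, (Q k i m)ᶜ ∈ SigmaZero X (μf k i m + 1) :=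
      fun k i m => (hprop k i m).2.2.2
    set c : ℕ → ℕ → X → ℕ :=
      fun k n x => sInf {i | i ≤ n ∧ x ∈ ⋂ m ∈ Finset.range (n + 1), Q k i m} with hc
    set code : ℕ → X → ℕ :=
      fun n x => Encodable.encode (List.ofFn fun j : Fin (n + 1) => c (j : ℕ) n x) with hcode
    set KL : ℕ → List ℕ → ℕ := fun n l => Nat.findGreatest
      (fun k => ∀ j < k, dist (w j (l.getD j 0)) (w (j+1) (l.getD (j+1) 0)) < 2 * (1/2:ℝ)^j) n
      with hKL
    set FL : ℕ → List ℕ → Y := fun n l => w (KL n l) (l.getD (KL n l) 0) with hFL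
    set F : ℕ → ℕ → Y := fun n t =>
      (Encodable.decode (α := List ℕ) t).elim (Classical.arbitrary Y) (FL n) with hFcode
    set h : ℕ → X → Y := fun n x => F n (code n x) with hh
    have hhn : ∀ n x, h n x = FL n (List.ofFn fun j : Fin (n + 1) => c (j : ℕ) n x) := by
      intro n x
      simp only [hh, hFcode, hcode, Encodable.encodek, Option.elim_some]
    have hgetD : ∀ (n : ℕ) (x : X) (j : ℕ), j < n + 1 →
        (List.ofFn fun i : Fin (n + 1) => c (i : ℕ) n x).getD j 0 = c j n x := by
      intro n x j hj
      rw [List.getD_eq_getElem _ _ (by simpa [List.length_ofFn] using hj),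
        List.getElem_ofFn]
    -- pointwise convergence
    have hconv : ∀ x, Tendsto (fun n => h n x) atTop (𝓝 (f x)) := by
      intro x
      rw [Metric.tendsto_atTop]
      intro ε hε
      obtain ⟨k, hk⟩ := exists_pow_lt_of_lt_one (show (0:ℝ) < ε/5 by positivity)
        (show (1/2:ℝ) < 1 by norm_num)
      choose i₀ hi₀ N hN using fun j : ℕ => stage_stab (hcov j) x
      refine ⟨max (k + 1) ((Finset.range (k + 1)).sup N), fun n hn => ?_⟩
      have hkn : k ≤ n := le_trans (Nat.le_succ k) (le_trans (le_max_left _ _) hn)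
      have hstab : ∀ j ≤ k, c j n x = i₀ j := by
        intro j hj
        refine hN j n (le_trans ?_ hn)
        exact le_trans (Finset.le_sup (Finset.mem_range.mpr (Nat.lt_succ_iff.mpr hj)))
          (le_max_right _ _)
      set l := List.ofFn fun j : Fin (n + 1) => c (j : ℕ) n x with hl
      have hlget : ∀ j ≤ n, l.getD j 0 = c j n x := fun j hj =>
        hgetD n x j (Nat.lt_succ_iff.mpr hj)
      set Kn := KL n l with hKn
      have hKnle : Kn ≤ n := Nat.findGreatest_le n
      have hPk : ∀ j < k, dist (w j (l.getD j 0)) (w (j+1) (l.getD (j+1) 0)) < 2 * (1/2:ℝ)^j := by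
        intro j hj
        have hj1 : j ≤ n := le_trans (le_of_lt hj) hkn
        have hj2 : j + 1 ≤ n := le_trans (Nat.succ_le_of_lt hj) hkn
        rw [hlget j hj1, hlget (j+1) hj2, hstab j (le_of_lt hj), hstab (j+1) (Nat.succ_le_of_lt hj)]
        have d1 := hdist j (i₀ j) x (hi₀ j)
        have d2 := hdist (j+1) (i₀ (j+1)) x (hi₀ (j+1))
        have htri : dist (w j (i₀ j)) (w (j+1) (i₀ (j+1))) ≤
            dist (f x) (w j (i₀ j)) + dist (f x) (w (j+1) (i₀ (j+1))) := by
          rw [dist_comm (f x) (w j (i₀ j))]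
          exact dist_triangle _ _ _
        have hpow : (1/2:ℝ)^(j+1) = (1/2:ℝ)^j / 2 := by rw [pow_succ]; ring
        have hp : (0:ℝ) < (1/2:ℝ)^j := by positivity
        linarith
      have hKk : k ≤ Kn := Nat.le_findGreatest hkn hPk
      have hPKn : ∀ j < Kn, dist (w j (l.getD j 0)) (w (j+1) (l.getD (j+1) 0)) < 2 * (1/2:ℝ)^j := by
        have := Nat.findGreatest_spec (P := fun k => ∀ j < k,
            dist (w j (l.getD j 0)) (w (j+1) (l.getD (j+1) 0)) < 2 * (1/2:ℝ)^j)
          (Nat.zero_le n) (fun j hj => absurd hj (Nat.not_lt_zero j))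
        exact this
      have hchain : dist (w k (c k n x)) (w Kn (c Kn n x)) ≤
          4 * (1/2:ℝ)^k - 4 * (1/2:ℝ)^Kn := by
        refine dist_chain (u := fun j => w j (c j n x)) Kn hKk ?_
        intro j hjk hjK
        have hj1 : j ≤ n := le_trans (le_of_lt hjK) hKnle
        have hj2 : j + 1 ≤ n := le_trans hjK hKnle
        have := hPKn j hjK
        rwa [hlget j hj1, hlget (j+1) hj2] at this
      have hhval : h n x = w Kn (c Kn n x) := by
        rw [hhn n x, ← hl]
        simp only [hFL, ← hKn]
        rw [hlget Kn hKnle]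
      have d1 := hdist k (i₀ k) x (hi₀ k)
      have hck : c k n x = i₀ k := hstab k le_rfl
      have htri : dist (h n x) (f x) ≤
          dist (w Kn (c Kn n x)) (w k (c k n x)) + dist (w k (c k n x)) (f x) := by
        rw [hhval]
        exact dist_triangle _ _ _
      have hpKn : (0:ℝ) < (1/2:ℝ)^Kn := by positivity
      have hd2 : dist (w k (c k n x)) (f x) < (1/2:ℝ)^k := by rw [hck, dist_comm]; exact d1
      have hchain' : dist (w Kn (c Kn n x)) (w k (c k n x)) ≤ 4 * (1/2:ℝ)^k := by
        rw [dist_comm]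
        linarith
      linarith
    -- Baire class of the stage functions
    have hclass : ∀ n, ∃ κ, κ < ξ ∧ 1 ≤ κ ∧ BaireClass κ (h n) := by
      intro n
      set T : Finset (ℕ × ℕ × ℕ) :=
        Finset.range (n+1) ×ˢ Finset.range (n+1) ×ˢ Finset.range (n+1) with hT
      set κ : Ordinal.{0} := T.sup (fun p => μf p.1 p.2.1 p.2.2) with hκ
      have h000 : ((0:ℕ), (0:ℕ), (0:ℕ)) ∈ T := by simp [hT]
      have hκ1 : 1 ≤ κ := le_trans (hμ1 0 0 0)
        (Finset.le_sup (f := fun p : ℕ×ℕ×ℕ => μf p.1 p.2.1 p.2.2) h000)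
      have hbot : (⊥ : Ordinal.{0}) < ξ := by
        rw [Ordinal.bot_eq_zero]
        exact lt_of_lt_of_le zero_lt_one hξ
      have hκξ : κ < ξ := by
        rw [hκ, Finset.sup_lt_iff hbot]
        exact fun p _ => hμξ _ _ _
      have hμκ : ∀ j ≤ n, ∀ i ≤ n, ∀ m ≤ n, μf j i m ≤ κ := by
        intro j hj i hi m hm
        refine Finset.le_sup (f := fun p : ℕ×ℕ×ℕ => μf p.1 p.2.1 p.2.2) (?_ : (j,i,m) ∈ T)
        simp [hT, Nat.lt_succ_iff, hj, hi, hm]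
      have hκ1' : (1:Ordinal.{0}) ≤ κ + 1 := le_trans hκ1 (le_of_lt (ord_lt_add_one κ))
      have hlev : ∀ j ≤ n, ∀ i : ℕ, {x : X | c j n x = i} ∈ SigmaZero X (κ+1) := by
        intro j hj i
        have hE : ∀ i' ≤ n, (⋂ m ∈ Finset.range (n+1), Q j i' m) ∈ SigmaZero X (κ+1) ∧
            (⋂ m ∈ Finset.range (n+1), Q j i' m)ᶜ ∈ SigmaZero X (κ+1) := by
          intro i' hi'
          constructor
          · exact biInter_mem_sigmaZero hκ1' fun m hm =>
              sigmaZero_mono (le_trans (hμ1 _ _ _) (le_of_lt (ord_lt_add_one _)))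
                (ord_add_one_mono (hμκ j hj i' hi' m (Nat.lt_succ_iff.mp hm)))
                (hQmem j i' m)
          · have hcompl : (⋂ m ∈ Finset.range (n+1), Q j i' m)ᶜ =
                ⋃ m ∈ Finset.range (n+1), (Q j i' m)ᶜ := by
              simp [compl_iInter]
            rw [hcompl]
            exact biUnion_mem_sigmaZero hκ1' fun m hm =>
              sigmaZero_mono (le_trans (hμ1 _ _ _) (le_of_lt (ord_lt_add_one _)))
                (ord_add_one_mono (hμκ j hj i' hi' m (Nat.lt_succ_iff.mp hm)))
                (hQcmem j i' m)
        have := level_set_mem hκ1' n (E := fun i' => ⋂ m ∈ Finset.range (n+1), Q j i' m)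
          (fun i' hi' => hE i' hi') i
        simpa [hc] using this
      set B : ℕ → Set X := fun t => {x | code n x = t} with hB
      refine ⟨κ, hκξ, hκ1, simple_baire κ (h n) B (F n) hκ1 ?_ ?_ ?_ ?_⟩
      · intro t t' ht
        rw [Set.disjoint_left]
        intro x hx hx'
        have hx1 : code n x = t := hx
        have hx2 : code n x = t' := hx'
        exact ht (hx1.symm.trans hx2)
      · rw [eq_univ_iff_forall]
        intro x
        exact mem_iUnion.mpr ⟨code n x, rfl⟩
      · intro t
        by_cases hrange : ∃ L : List ℕ, Encodable.encode L = t
        · obtain ⟨L, rfl⟩ := hrange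
          by_cases hlen : L.length = n + 1
          · have hBt : B (Encodable.encode L) =
                ⋂ j ∈ Finset.range (n+1), {x : X | c j n x = L.getD j 0} := by
              ext x
              simp only [hB, mem_setOf_eq, mem_iInter, Finset.mem_range, hcode]
              constructor
              · intro hxt j hj
                have hLL : (List.ofFn fun i : Fin (n+1) => c (i:ℕ) n x) = L :=
                  Encodable.encode_injective hxt
                rw [← hLL, hgetD n x j hj]
              · intro hall
                congr 1
                refine List.ext_getElem (by simp [List.length_ofFn, hlen]) ?_
                intro i h1' h2'
                have hi : i < n + 1 := by simpa [List.length_ofFn] using h1'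
                have hgi := hall i hi
                rw [List.getD_eq_getElem L 0 h2'] at hgi
                simp only [List.getElem_ofFn]
                exact hgi
            rw [hBt]
            exact biInter_mem_sigmaZero hκ1' fun j hj =>
              hlev j (Nat.lt_succ_iff.mp hj) _
          · have hBt : B (Encodable.encode L) = ∅ := by
              ext x
              simp only [hB, mem_setOf_eq, mem_empty_iff_false, iff_false, hcode]
              intro hxt
              have hLL := Encodable.encode_injective hxt
              apply hlen
              rw [← hLL]
              simp [List.length_ofFn]
            rw [hBt]
            exact empty_mem_sigmaZero hκ1'
        · have hBt : B t = ∅ := by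
            ext x
            simp only [hB, mem_setOf_eq, mem_empty_iff_false, iff_false, hcode]
            intro hxt
            exact hrange ⟨_, hxt⟩
          rw [hBt]
          exact empty_mem_sigmaZero hκ1'
      · intro t x hx
        have hxt : code n x = t := hx
        simp only [hh, hxt]
    rw [baireClass_iff h1]
    exact ⟨h, hclass, hconv⟩

end Aux8

section Aux9
variable {X Y : Type*}

theorem sInf_piece {A : ℕ → Set X} (hdis : ∀ i j, i ≠ j → Disjoint (A i) (A j))
    {i : ℕ} {x : X} (hx : x ∈ A i) : sInf {j | x ∈ A j} = i := by
  have hset : {j | x ∈ A j} = {i} := by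
    ext j
    simp only [mem_setOf_eq, mem_singleton_iff]
    constructor
    · intro hj
      by_contra hne
      exact Set.disjoint_left.mp (hdis j i hne) hj hx
    · rintro rfl
      exact hx
  rw [hset]
  exact csInf_singleton i

end Aux9


/-- Let `(X,d_X)`, `(Y,d_Y)` be metric spaces with `Y` separable, and let
`1 ≤ ξ < ω₁`.  A function `f : X → Y` is of Baire class `ξ` iff it is the
uniform limit of a sequence of `Δ⁰_{ξ+1}`-functions. -/
theorem baireClass_iff_uniform_limit_deltaFun
    {X Y : Type*} [MetricSpace X] [MetricSpace Y] [TopologicalSpace.SeparableSpace Y]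
    (ξ : Ordinal.{0}) (hξ1 : 1 ≤ ξ) (hξ : ξ < ω₁) (f : X → Y) :
    BaireClass ξ f ↔
      ∃ g : ℕ → X → Y, (∀ k, IsDeltaFun (ξ + 1) (g k)) ∧
        TendstoUniformly g f atTop := by
  classical
  have h1' : (1:Ordinal.{0}) ≤ ξ + 1 := le_trans hξ1 (le_of_lt (ord_lt_add_one ξ))
  constructor
  · intro hb
    cases isEmpty_or_nonempty X with
    | inl hX =>
      refine ⟨fun _ => f, fun k S hS => ?_, ?_⟩
      · rw [Set.eq_empty_of_isEmpty (f ⁻¹' S)]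
        exact empty_mem_sigmaZero h1'
      · rw [Metric.tendstoUniformly_iff]
        intro ε hε
        exact Eventually.of_forall fun k x => by simpa using hε
    | inr hX =>
      have hY : Nonempty Y := ⟨f (Classical.arbitrary X)⟩
      have hM : Msble ξ f := baire_msble ξ f hξ1 hb
      have hdat : ∀ k : ℕ, ∃ (A : ℕ → Set X) (y : ℕ → Y),
          (∀ i j, i ≠ j → Disjoint (A i) (A j)) ∧ (⋃ i, A i) = Set.univ ∧
          (∀ i, A i ∈ SigmaZero X (ξ + 1)) ∧
          (∀ i, ∀ x ∈ A i, dist (f x) (y i) < (1/2:ℝ)^k) :=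
        fun k => msble_approx hξ1 hM (by positivity)
      choose A y hdis hcov hmem hdist using hdat
      set g : ℕ → X → Y := fun k x => y k (sInf {i | x ∈ A k i}) with hg
      have hpiece : ∀ k x, ∃ i, x ∈ A k i ∧ g k x = y k i := by
        intro k x
        have : x ∈ ⋃ i, A k i := by rw [hcov k]; exact mem_univ x
        obtain ⟨i, hxi⟩ := mem_iUnion.mp this
        exact ⟨i, hxi, by simp only [hg]; rw [sInf_piece (hdis k) hxi]⟩
      have hgdist : ∀ k x, dist (f x) (g k x) < (1/2:ℝ)^k := by
        intro k x
        obtain ⟨i, hxi, hgv⟩ := hpiece k x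
        rw [hgv]
        exact hdist k i x hxi
      refine ⟨g, ?_, ?_⟩
      · intro k S _
        have heq : g k ⁻¹' S = ⋃ i, if y k i ∈ S then A k i else ∅ := by
          ext x
          simp only [mem_preimage, mem_iUnion]
          constructor
          · intro hx
            obtain ⟨i, hxi, hgv⟩ := hpiece k x
            refine ⟨i, ?_⟩
            rw [if_pos (by rw [← hgv]; exact hx)]
            exact hxi
          · rintro ⟨i, hxi⟩
            by_cases hyS : y k i ∈ S
            · rw [if_pos hyS] at hxi
              obtain ⟨i', hxi', hgv⟩ := hpiece k x
              have : i' = i := by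
                by_contra hne
                exact Set.disjoint_left.mp (hdis k i' i hne) hxi' hxi
              rw [hgv, this]
              exact hyS
            · rw [if_neg hyS] at hxi
              exact absurd hxi (notMem_empty x)
        rw [heq]
        refine iUnion_mem_sigmaZero h1' fun i => ?_
        by_cases hyS : y k i ∈ S
        · rw [if_pos hyS]; exact hmem k i
        · rw [if_neg hyS]; exact empty_mem_sigmaZero h1'
      · rw [Metric.tendstoUniformly_iff]
        intro ε hε
        obtain ⟨K, hK⟩ := exists_pow_lt_of_lt_one hε (by norm_num : (1/2:ℝ) < 1)
        rw [eventually_atTop]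
        refine ⟨K, fun k hk x => ?_⟩
        have h2 : ((1:ℝ)/2)^k ≤ ((1:ℝ)/2)^K :=
          pow_le_pow_of_le_one (by norm_num) (by norm_num) hk
        exact lt_of_lt_of_le (hgdist k x) (le_trans h2 (le_of_lt hK))
  · rintro ⟨g, hd, hu⟩
    have hM : Msble ξ f := uniform_msble hξ1 (fun k => deltaFun_msble hξ1 (hd k)) hu
    exact msble_baire hξ1 hM
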